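/- Let B, c₂, c₃ ∈ ℝ and define P(α,β) := 1/(4π) − (3/(8π)) sin²β cos(2α) · B + [ (3/(16π)) sin⁴β cos(4α) + c₂ sin²β cos(2α) + c₃ sin²β sin(2α) ] · B². Then, with d(α,β) = (cos α sin β, sin α sin β, cos β), the sphere average of d₁ d₂ against P satisfies ∫₀^{2π} ∫₀^{π} d₁(α,β) d₂(α,β) P(α,β) sin β dβ dα = (8π/15) c₃ B². -/

import Mathlib

open MeasureTheory intervalIntegral

/-- The truncated asymptotic expansion (in the Bretherton constant `B`) of the
steady-state orientation distribution. -/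
noncomputable def Pexp (B c₂ c₃ α β : ℝ) : ℝ :=
  1 / (4 * Real.pi)
    - 3 / (8 * Real.pi) * Real.sin β ^ 2 * Real.cos (2 * α) * B
    + (3 / (16 * Real.pi) * Real.sin β ^ 4 * Real.cos (4 * α)
        + c₂ * Real.sin β ^ 2 * Real.cos (2 * α)
        + c₃ * Real.sin β ^ 2 * Real.sin (2 * α)) * B ^ 2

/-!
The integrand factors as `½ sin 2α · sin³β · (a + b sin²β + c sin⁴β)`, where `a, b, c`
are trigonometric polynomials in `α`. The Wallis integrals
`∫₀^π sin^{3,5,7} = 4/3, 16/15, 32/35` do the `β`-integral; over the full period in `α`,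
orthogonality kills every term of `sin 2α · (…)` except the `c₃ sin² 2α` one, which
contributes `π`.
-/

open Real

theorem integral_sin_nat_mul_zero_two_pi (n : ℕ) : ∫ x in (0:ℝ)..2 * π, sin (n * x) = 0 := by
  rcases eq_or_ne n 0 with rfl | hn
  · simp
  · rw [integral_comp_mul_left (fun x => sin x) (Nat.cast_ne_zero.2 hn), integral_sin,
      cos_nat_mul_two_pi]
    simp

theorem integral_cos_nat_mul_zero_two_pi {n : ℕ} (hn : n ≠ 0) :
    ∫ x in (0:ℝ)..2 * π, cos (n * x) = 0 := by
  rw [integral_comp_mul_left (fun x => cos x) (Nat.cast_ne_zero.2 hn), integral_cos,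
    show (n : ℝ) * (2 * π) = (2 * n : ℕ) * π by push_cast; ring, sin_nat_mul_pi]
  simp

theorem integral_sin_two_mul_mul_trig_poly (u v w z : ℝ) :
    ∫ x in (0:ℝ)..2 * π,
        sin (2 * x) * (u + v * cos (2 * x) + w * sin (2 * x) + z * cos (4 * x)) = π * w := by
  have product_to_sum : ∀ x,
      sin (2 * x) * (u + v * cos (2 * x) + w * sin (2 * x) + z * cos (4 * x))
        = (u - z / 2) * sin ((2 : ℕ) * x) + v / 2 * sin ((4 : ℕ) * x)
          + z / 2 * sin ((6 : ℕ) * x) - w / 2 * cos ((4 : ℕ) * x) + w / 2 := fun x => by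
    have h4 : (4 : ℝ) * x = 2 * (2 * x) := by ring
    have h6 : (6 : ℝ) * x = 2 * x + 2 * (2 * x) := by ring
    push_cast
    rw [h4, h6, sin_add, sin_two_mul (2 * x), cos_two_mul (2 * x)]
    linear_combination w * sin_sq_add_cos_sq (2 * x)
  have hs : ∀ (k : ℝ) (n : ℕ),
      IntervalIntegrable (fun x => k * sin (n * x)) volume 0 (2 * π) :=
    fun k n => (by fun_prop : Continuous _).intervalIntegrable _ _
  have hc : IntervalIntegrable (fun x => w / 2 * cos ((4 : ℕ) * x)) volume 0 (2 * π) :=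
    (by fun_prop : Continuous _).intervalIntegrable _ _
  simp_rw [product_to_sum]
  rw [integral_add (((hs _ _).add (hs _ _)).add (hs _ _) |>.sub hc) intervalIntegrable_const,
    integral_sub (((hs _ _).add (hs _ _)).add (hs _ _)) hc,
    integral_add ((hs _ _).add (hs _ _)) (hs _ _), integral_add (hs _ _) (hs _ _)]
  simp only [intervalIntegral.integral_const_mul, integral_sin_nat_mul_zero_two_pi,
    integral_cos_nat_mul_zero_two_pi (by norm_num : (4 : ℕ) ≠ 0),
    intervalIntegral.integral_const, smul_eq_mul]
  ring

theorem integral_sin_pow_three_mul_poly_sin_sq (a b c : ℝ) :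
    ∫ x in (0:ℝ)..π, sin x ^ 3 * (a + b * sin x ^ 2 + c * sin x ^ 4)
      = 4 / 3 * a + 16 / 15 * b + 32 / 35 * c := by
  have odd_powers : ∀ x, sin x ^ 3 * (a + b * sin x ^ 2 + c * sin x ^ 4)
      = a * sin x ^ (2 * 1 + 1) + b * sin x ^ (2 * 2 + 1) + c * sin x ^ (2 * 3 + 1) :=
    fun x => by ring
  have hi : ∀ (k : ℝ) (n : ℕ), IntervalIntegrable (fun x => k * sin x ^ n) volume 0 π :=
    fun k n => (by fun_prop : Continuous _).intervalIntegrable _ _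
  simp_rw [odd_powers]
  rw [integral_add ((hi a _).add (hi b _)) (hi c _), integral_add (hi a _) (hi b _),
    intervalIntegral.integral_const_mul, intervalIntegral.integral_const_mul,
    intervalIntegral.integral_const_mul, integral_sin_pow_odd, integral_sin_pow_odd,
    integral_sin_pow_odd]
  norm_num [Finset.prod_range_succ]
  ring

/-- The sphere average of `d₁ d₂` against the truncated
expansion `P` equals `(8π/15) c₃ B²`. -/
theorem shear_stress_average (B c₂ c₃ : ℝ) :
    (∫ α in (0:ℝ)..(2 * Real.pi), ∫ β in (0:ℝ)..Real.pi,
        (Real.cos α * Real.sin β) * (Real.sin α * Real.sin β)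
          * Pexp B c₂ c₃ α β * Real.sin β)
      = 8 * Real.pi / 15 * c₃ * B ^ 2 := by
  have inner : ∀ α,
      ∫ β in (0:ℝ)..π, (cos α * sin β) * (sin α * sin β) * Pexp B c₂ c₃ α β * sin β
      = sin (2 * α) * (1 / (6 * π) + 8 / 15 * (c₂ * B ^ 2 - 3 / (8 * π) * B) * cos (2 * α)
          + 8 / 15 * c₃ * B ^ 2 * sin (2 * α) + 3 / (35 * π) * B ^ 2 * cos (4 * α)) := by
    intro α
    have factor : ∀ β, (cos α * sin β) * (sin α * sin β) * Pexp B c₂ c₃ α β * sin β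
        = sin (2 * α) / 2 * (sin β ^ 3 * (1 / (4 * π)
          + ((c₂ * B ^ 2 - 3 / (8 * π) * B) * cos (2 * α) + c₃ * B ^ 2 * sin (2 * α))
            * sin β ^ 2
          + 3 / (16 * π) * B ^ 2 * cos (4 * α) * sin β ^ 4)) := fun β => by
      rw [Pexp, sin_two_mul]; ring
    simp_rw [factor]
    rw [intervalIntegral.integral_const_mul, integral_sin_pow_three_mul_poly_sin_sq]
    ring
  simp_rw [inner]
  rw [integral_sin_two_mul_mul_trig_poly]
  ring
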